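/- With the hypotheses and notation of the transport construction applied to u, v ∈ M with x^u, x^v ∈ S_x: setting t = u ∧ v (so that x^t ∈ S_x) and letting t₀,…,t_r be the sequence associated to (x, t), one has t_i = u_i ∧ v_i for all i = 0,…,r. -/

import Mathlib

namespace GarsideFormal

variable (G : Type*) [Group G]

/-- An atom of the submonoid `M`: a nontrivial element admitting no nontrivial
factorization inside `M`. -/
def IsMAtom (M : Submonoid G) (a : G) : Prop :=
  a ∈ M ∧ a ≠ 1 ∧ ∀ b ∈ M, ∀ c ∈ M, a = b * c → b = 1 ∨ c = 1

/-- A Garside monoid `M`, realized as a submonoid (positive cone) of its group of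
fractions `G`, together with its Garside element `δ`, left gcd and left lcm
operations (extended to `G`), and the cycling operation `cyc`. -/
structure Garside where
  M : Submonoid G
  δ : G
  gcd : G → G → G
  lcm : G → G → G
  cyc : G → G
  δ_mem : δ ∈ M
  /-- `G` is the group of fractions of `M`. -/
  fractions : ∀ g : G, ∃ a ∈ M, ∃ b ∈ M, g = a⁻¹ * b
  /-- `M` is generated by its atoms. -/
  atoms_generate : Submonoid.closure {a : G | IsMAtom G M a} = M
  /-- Atomicity: bounded factorization lengths into atoms. -/
  atomic_bound : ∀ a ∈ M, ∃ N : ℕ, ∀ L : List G,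
      (∀ b ∈ L, IsMAtom G M b) → L.prod = a → L.length ≤ N
  /-- Left divisors of `δ` coincide with right divisors of `δ`. -/
  divs_eq : {x : G | x ∈ M ∧ x⁻¹ * δ ∈ M} = {x : G | x ∈ M ∧ δ * x⁻¹ ∈ M}
  divs_finite : Set.Finite {x : G | x ∈ M ∧ x⁻¹ * δ ∈ M}
  divs_generate : Submonoid.closure {x : G | x ∈ M ∧ x⁻¹ * δ ∈ M} = M
  gcd_dvd_left : ∀ a b : G, (gcd a b)⁻¹ * a ∈ M
  gcd_dvd_right : ∀ a b : G, (gcd a b)⁻¹ * b ∈ M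
  gcd_greatest : ∀ a b x : G, x⁻¹ * a ∈ M → x⁻¹ * b ∈ M → x⁻¹ * gcd a b ∈ M
  lcm_dvd_left : ∀ a b : G, a⁻¹ * lcm a b ∈ M
  lcm_dvd_right : ∀ a b : G, b⁻¹ * lcm a b ∈ M
  lcm_least : ∀ a b x : G, a⁻¹ * x ∈ M → b⁻¹ * x ∈ M → (lcm a b)⁻¹ * x ∈ M
  /-- Cycling: if `k = inf x` then `cyc x = x ^ (τ⁻ᵏ A₁)` where `A₁ = δ ∧ δ⁻ᵏ x`
  is the first factor of the left normal form of `x` (when `len x = 0` this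
  gcd is `1` and `cyc x = x`). -/
  cyc_spec : ∀ (x : G) (k : ℤ),
      ((δ ^ k)⁻¹ * x ∈ M ∧ ∀ j : ℤ, (δ ^ j)⁻¹ * x ∈ M → j ≤ k) →
      cyc x = (δ ^ k * gcd δ ((δ ^ k)⁻¹ * x) * (δ ^ k)⁻¹)⁻¹ * x *
              (δ ^ k * gcd δ ((δ ^ k)⁻¹ * x) * (δ ^ k)⁻¹)

variable {G}

namespace Garside

variable (S : Garside G)

/-- Left divisibility `a ≼ b`. -/
def dvd (a b : G) : Prop := a⁻¹ * b ∈ S.M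

/-- Simple elements: the (left) divisors of `δ` in `M`. -/
def Simple (a : G) : Prop := a ∈ S.M ∧ a⁻¹ * S.δ ∈ S.M

/-- `k` is the infimum of `x`: maximal with `δ^k ≼ x`. -/
def IsInf (x : G) (k : ℤ) : Prop :=
  (S.δ ^ k)⁻¹ * x ∈ S.M ∧ ∀ j : ℤ, (S.δ ^ j)⁻¹ * x ∈ S.M → j ≤ k

/-- `s` is the supremum of `x`: minimal with `x ≼ δ^s`. -/
def IsSup (x : G) (s : ℤ) : Prop :=
  x⁻¹ * S.δ ^ s ∈ S.M ∧ ∀ j : ℤ, x⁻¹ * S.δ ^ j ∈ S.M → s ≤ j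

/-- `y` lies in the super summit set of `x`: `y` is conjugate to `x`, with
maximal infimum and minimal supremum among all conjugates of `x`. -/
def InSS (x y : G) : Prop :=
  IsConj x y ∧
  (∃ k : ℤ, S.IsInf y k ∧ ∀ z : G, IsConj x z → ∀ k' : ℤ, S.IsInf z k' → k' ≤ k) ∧
  (∃ s : ℤ, S.IsSup y s ∧ ∀ z : G, IsConj x z → ∀ s' : ℤ, S.IsSup z s' → s ≤ s')

/-- `y` lies in the ultra summit set of `x`: it is in the super summit set and
periodic under cycling. -/
def InUS (x y : G) : Prop :=
  S.InSS x y ∧ ∃ n : ℕ, 0 < n ∧ S.cyc^[n] y = y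

/-- `τ^k(z) = δ⁻ᵏ z δᵏ`, where `τ : z ↦ δ⁻¹zδ`. -/
def tauPow (k : ℤ) (z : G) : G := (S.δ ^ k)⁻¹ * z * S.δ ^ k

end Garside

/-- The ordered product `A (i+1) * A (i+2) * ⋯ * A r`. -/
def prodSeg (A : ℕ → G) (i r : ℕ) : G :=
  ((List.range (r - i)).map (fun j => A (i + 1 + j))).prod

namespace Garside

variable (S : Garside G)

/-- `x` has left normal form `δ^k A₁ ⋯ A_r`: each `Aᵢ` is a nontrivial simple
element and `(Aᵢ⁻¹ δ) ∧ A_{i+1} = 1`. -/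
def IsNormalForm (x : G) (k : ℤ) (r : ℕ) (A : ℕ → G) : Prop :=
  x = S.δ ^ k * prodSeg A 0 r ∧
  (∀ i, 1 ≤ i → i ≤ r → S.Simple (A i) ∧ A i ≠ 1) ∧
  (∀ i, 1 ≤ i → i < r → S.gcd ((A i)⁻¹ * S.δ) (A (i + 1)) = 1)

/-- The sequence `u₀, …, u_r` of the transport construction for `(x, u)`,
where `x` has normal form `δ^k A₁ ⋯ A_r`:
`u₀ = τᵏ(u)`, `u_r = u`, and `uᵢ = (A_{i+1} ⋯ A_r u) ∧ δ·τ(Aᵢ⁻¹ u_{i-1})`. -/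
def IsTransportSeq (k : ℤ) (r : ℕ) (A : ℕ → G) (u : G) (useq : ℕ → G) : Prop :=
  useq 0 = S.tauPow k u ∧ useq r = u ∧
  ∀ i, 1 ≤ i → i ≤ r →
    useq i = S.gcd (prodSeg A i r * u) (S.δ * S.tauPow 1 ((A i)⁻¹ * useq (i - 1)))

/-- The transport `φ_x(u) = τ⁻ᵏ(u₁) = τ⁻ᵏ(A₁⁻¹ · τᵏ(u) · (δ ∧ δ⁻ᵏ(x^u)))`,
where `k = inf x` and `A₁ = δ ∧ δ⁻ᵏ x`. -/
def transp (k : ℤ) (x u : G) : G :=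
  S.δ ^ k *
    ((S.gcd S.δ ((S.δ ^ k)⁻¹ * x))⁻¹ * S.tauPow k u *
      S.gcd S.δ ((S.δ ^ k)⁻¹ * (u⁻¹ * x * u))) * (S.δ ^ k)⁻¹

end Garside

namespace Garside

variable {G : Type*} [Group G] (S : Garside G)

lemma eq_one_of_mem_inv_mem {m : G} (hm : m ∈ S.M) (hm' : m⁻¹ ∈ S.M) : m = 1 := by
  by_contra hne
  rw [← S.atoms_generate] at hm hm'
  obtain ⟨L, hL, hLp⟩ := Submonoid.exists_list_of_mem_closure hm
  obtain ⟨L', hL', hLp'⟩ := Submonoid.exists_list_of_mem_closure hm'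
  obtain ⟨N, hN⟩ := S.atomic_bound 1 S.M.one_mem
  have hLne : L ≠ [] := by rintro rfl; simp at hLp; exact hne hLp.symm
  set K := (List.replicate (N + 1) (L ++ L')).flatten with hK
  have hKatoms : ∀ b ∈ K, IsMAtom G S.M b := by
    intro b hb
    rw [hK, List.mem_flatten] at hb
    obtain ⟨l, hl, hbl⟩ := hb
    rw [List.eq_of_mem_replicate hl] at hbl
    rcases List.mem_append.mp hbl with h | h
    · exact hL b h
    · exact hL' b h
  have hKprod : K.prod = 1 := by
    rw [hK, List.prod_flatten, List.map_replicate, List.prod_replicate, List.prod_append,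
      hLp, hLp', mul_inv_cancel, one_pow]
  have hKlen : K.length ≤ N := hN K hKatoms hKprod
  have hlen : K.length = (N + 1) * (L.length + L'.length) := by
    rw [hK, List.length_flatten, List.map_replicate, List.sum_replicate, List.length_append]
    simp [mul_comm]
  have h1 : 1 ≤ L.length := List.length_pos_iff.mpr hLne
  have h2 : N + 1 ≤ K.length := by
    rw [hlen]
    exact Nat.le_mul_of_pos_right (N + 1) (by omega)
  omega

lemma dvd_trans' {a b c : G} (h1 : a⁻¹ * b ∈ S.M) (h2 : b⁻¹ * c ∈ S.M) :
    a⁻¹ * c ∈ S.M := by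
  have h := S.M.mul_mem h1 h2
  rwa [show a⁻¹ * b * (b⁻¹ * c) = a⁻¹ * c by group] at h

lemma dvd_antisymm' {a b : G} (h1 : a⁻¹ * b ∈ S.M) (h2 : b⁻¹ * a ∈ S.M) : a = b := by
  have h := S.eq_one_of_mem_inv_mem h1 (by rwa [show (a⁻¹ * b)⁻¹ = b⁻¹ * a by group])
  have : a * (a⁻¹ * b) = a * 1 := by rw [h]
  simpa [mul_assoc] using this.symm

lemma gcd_unique {a b g : G} (h1 : g⁻¹ * a ∈ S.M) (h2 : g⁻¹ * b ∈ S.M)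
    (h3 : ∀ y : G, y⁻¹ * a ∈ S.M → y⁻¹ * b ∈ S.M → y⁻¹ * g ∈ S.M) :
    S.gcd a b = g :=
  S.dvd_antisymm' (h3 _ (S.gcd_dvd_left a b) (S.gcd_dvd_right a b))
    (S.gcd_greatest a b g h1 h2)

lemma gcd_mul_left (g a b : G) : S.gcd (g * a) (g * b) = g * S.gcd a b := by
  apply S.gcd_unique
  · rw [show (g * S.gcd a b)⁻¹ * (g * a) = (S.gcd a b)⁻¹ * a by group]
    exact S.gcd_dvd_left a b
  · rw [show (g * S.gcd a b)⁻¹ * (g * b) = (S.gcd a b)⁻¹ * b by group]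
    exact S.gcd_dvd_right a b
  · intro y hy1 hy2
    have h1 : (g⁻¹ * y)⁻¹ * a ∈ S.M := by rwa [show (g⁻¹ * y)⁻¹ * a = y⁻¹ * (g * a) by group]
    have h2 : (g⁻¹ * y)⁻¹ * b ∈ S.M := by rwa [show (g⁻¹ * y)⁻¹ * b = y⁻¹ * (g * b) by group]
    have h := S.gcd_greatest a b (g⁻¹ * y) h1 h2
    rwa [show (g⁻¹ * y)⁻¹ * S.gcd a b = y⁻¹ * (g * S.gcd a b) by group] at h

lemma tau_mem {m : G} (hm : m ∈ S.M) : S.δ⁻¹ * m * S.δ ∈ S.M := by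
  rw [← S.divs_generate] at hm
  induction hm using Submonoid.closure_induction with
  | mem x hx =>
    obtain ⟨hx1, hx2⟩ := hx
    have ht : (x⁻¹ * S.δ) ∈ {y : G | y ∈ S.M ∧ S.δ * y⁻¹ ∈ S.M} :=
      ⟨hx2, by rwa [show S.δ * (x⁻¹ * S.δ)⁻¹ = x by group]⟩
    rw [← S.divs_eq] at ht
    have := ht.2
    rwa [show (x⁻¹ * S.δ)⁻¹ * S.δ = S.δ⁻¹ * x * S.δ by group] at this
  | one => simpa using S.M.one_mem
  | mul x y hx hy ihx ihy =>
    have := S.M.mul_mem ihx ihy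
    rwa [show (S.δ⁻¹ * x * S.δ) * (S.δ⁻¹ * y * S.δ) = S.δ⁻¹ * (x * y) * S.δ by group] at this

lemma tau_inv_mem {m : G} (hm : m ∈ S.M) : S.δ * m * S.δ⁻¹ ∈ S.M := by
  rw [← S.divs_generate] at hm
  induction hm using Submonoid.closure_induction with
  | mem x hxm =>
    have hxr := hxm
    rw [S.divs_eq] at hxr
    have hy : S.δ * x⁻¹ ∈ S.M := hxr.2
    have ht : (S.δ * x⁻¹) ∈ {y : G | y ∈ S.M ∧ y⁻¹ * S.δ ∈ S.M} :=
      ⟨hy, by rw [show (S.δ * x⁻¹)⁻¹ * S.δ = x by group]; exact hxm.1⟩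
    rw [S.divs_eq] at ht
    have := ht.2
    rwa [show S.δ * (S.δ * x⁻¹)⁻¹ = S.δ * x * S.δ⁻¹ by group] at this
  | one => simpa using S.M.one_mem
  | mul x y hx hy ihx ihy =>
    have := S.M.mul_mem ihx ihy
    rwa [show (S.δ * x * S.δ⁻¹) * (S.δ * y * S.δ⁻¹) = S.δ * (x * y) * S.δ⁻¹ by group] at this

lemma tauPow_eq (k : ℤ) (z : G) : S.tauPow k z = (S.δ ^ k)⁻¹ * z * S.δ ^ k := rfl

lemma tauPow_mem (k : ℤ) {m : G} (hm : m ∈ S.M) : S.tauPow k m ∈ S.M := by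
  rw [Garside.tauPow_eq]
  induction k using Int.induction_on with
  | zero => simpa using hm
  | succ n ih =>
    have h := S.tau_mem ih
    rwa [show S.δ⁻¹ * ((S.δ ^ (n : ℤ))⁻¹ * m * S.δ ^ (n : ℤ)) * S.δ =
      (S.δ ^ ((n : ℤ) + 1))⁻¹ * m * S.δ ^ ((n : ℤ) + 1) by
        rw [zpow_add_one]; group] at h
  | pred n ih =>
    have h := S.tau_inv_mem ih
    rwa [show S.δ * ((S.δ ^ (-n : ℤ))⁻¹ * m * S.δ ^ (-n : ℤ)) * S.δ⁻¹ =
      (S.δ ^ (-n - 1 : ℤ))⁻¹ * m * S.δ ^ (-n - 1 : ℤ) by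
        rw [zpow_sub_one]; group] at h

lemma gcd_tauPow (k : ℤ) (a b : G) :
    S.gcd (S.tauPow k a) (S.tauPow k b) = S.tauPow k (S.gcd a b) := by
  apply S.gcd_unique
  · have := S.tauPow_mem k (S.gcd_dvd_left a b)
    rwa [show S.tauPow k ((S.gcd a b)⁻¹ * a) =
      (S.tauPow k (S.gcd a b))⁻¹ * S.tauPow k a by rw [Garside.tauPow_eq, Garside.tauPow_eq, Garside.tauPow_eq]; group] at this
  · have := S.tauPow_mem k (S.gcd_dvd_right a b)
    rwa [show S.tauPow k ((S.gcd a b)⁻¹ * b) =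
      (S.tauPow k (S.gcd a b))⁻¹ * S.tauPow k b by rw [Garside.tauPow_eq, Garside.tauPow_eq, Garside.tauPow_eq]; group] at this
  · intro y hy1 hy2
    have h1 : (S.tauPow (-k) y)⁻¹ * a ∈ S.M := by
      have := S.tauPow_mem (-k) hy1
      rwa [show S.tauPow (-k) (y⁻¹ * S.tauPow k a) = (S.tauPow (-k) y)⁻¹ * a by
        rw [Garside.tauPow_eq, Garside.tauPow_eq, Garside.tauPow_eq, zpow_neg]; group] at this
    have h2 : (S.tauPow (-k) y)⁻¹ * b ∈ S.M := by
      have := S.tauPow_mem (-k) hy2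
      rwa [show S.tauPow (-k) (y⁻¹ * S.tauPow k b) = (S.tauPow (-k) y)⁻¹ * b by
        rw [Garside.tauPow_eq, Garside.tauPow_eq, Garside.tauPow_eq, zpow_neg]; group] at this
    have h := S.gcd_greatest a b _ h1 h2
    have := S.tauPow_mem k h
    rwa [show S.tauPow k ((S.tauPow (-k) y)⁻¹ * S.gcd a b) =
      y⁻¹ * S.tauPow k (S.gcd a b) by rw [Garside.tauPow_eq, Garside.tauPow_eq, Garside.tauPow_eq, zpow_neg]; group] at this

lemma gcd_mul_right_zpow (s : ℤ) (a b : G) :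
    S.gcd (a * S.δ ^ s) (b * S.δ ^ s) = S.gcd a b * S.δ ^ s := by
  apply S.gcd_unique
  · have := S.tauPow_mem s (S.gcd_dvd_left a b)
    rwa [show S.tauPow s ((S.gcd a b)⁻¹ * a) =
      (S.gcd a b * S.δ ^ s)⁻¹ * (a * S.δ ^ s) by rw [Garside.tauPow_eq]; group] at this
  · have := S.tauPow_mem s (S.gcd_dvd_right a b)
    rwa [show S.tauPow s ((S.gcd a b)⁻¹ * b) =
      (S.gcd a b * S.δ ^ s)⁻¹ * (b * S.δ ^ s) by rw [Garside.tauPow_eq]; group] at this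
  · intro y hy1 hy2
    have h1 : (y * (S.δ ^ s)⁻¹)⁻¹ * a ∈ S.M := by
      have := S.tauPow_mem (-s) hy1
      rwa [show S.tauPow (-s) (y⁻¹ * (a * S.δ ^ s)) = (y * (S.δ ^ s)⁻¹)⁻¹ * a by
        rw [Garside.tauPow_eq, zpow_neg]; group] at this
    have h2 : (y * (S.δ ^ s)⁻¹)⁻¹ * b ∈ S.M := by
      have := S.tauPow_mem (-s) hy2
      rwa [show S.tauPow (-s) (y⁻¹ * (b * S.δ ^ s)) = (y * (S.δ ^ s)⁻¹)⁻¹ * b by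
        rw [Garside.tauPow_eq, zpow_neg]; group] at this
    have h := S.gcd_greatest a b _ h1 h2
    have := S.tauPow_mem s h
    rwa [show S.tauPow s ((y * (S.δ ^ s)⁻¹)⁻¹ * S.gcd a b) =
      y⁻¹ * (S.gcd a b * S.δ ^ s) by rw [Garside.tauPow_eq]; group] at this

lemma gcd_gcd_comm (a b c d : G) :
    S.gcd (S.gcd a b) (S.gcd c d) = S.gcd (S.gcd a c) (S.gcd b d) := by
  have key : ∀ p q w z : G,
      (S.gcd (S.gcd p q) (S.gcd w z))⁻¹ * S.gcd (S.gcd p w) (S.gcd q z) ∈ S.M := by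
    intro p q w z
    have hp := S.dvd_trans' (S.gcd_dvd_left (S.gcd p q) (S.gcd w z)) (S.gcd_dvd_left p q)
    have hq := S.dvd_trans' (S.gcd_dvd_left (S.gcd p q) (S.gcd w z)) (S.gcd_dvd_right p q)
    have hw := S.dvd_trans' (S.gcd_dvd_right (S.gcd p q) (S.gcd w z)) (S.gcd_dvd_left w z)
    have hz := S.dvd_trans' (S.gcd_dvd_right (S.gcd p q) (S.gcd w z)) (S.gcd_dvd_right w z)
    exact S.gcd_greatest _ _ _ (S.gcd_greatest _ _ _ hp hw) (S.gcd_greatest _ _ _ hq hz)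
  exact S.dvd_antisymm' (key a b c d) (key a c b d)

end Garside

/-- In the transport construction, with `t = u ∧ v` one has `x^t ∈ S_x` and the
sequence associated to `(x, t)` satisfies `tᵢ = uᵢ ∧ vᵢ` for all `i`. -/
theorem transport_seq_gcd {G : Type*} [Group G] (S : Garside G)
    (x u v : G) (k : ℤ) (r : ℕ) (A : ℕ → G)
    (hr : 1 ≤ r) (hnf : S.IsNormalForm x k r A) (hx : S.InSS x x)
    (hu : u ∈ S.M) (hv : v ∈ S.M)
    (hxu : S.InSS x (u⁻¹ * x * u)) (hxv : S.InSS x (v⁻¹ * x * v))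
    (useq vseq : ℕ → G)
    (hus : S.IsTransportSeq k r A u useq) (hvs : S.IsTransportSeq k r A v vseq) :
    S.InSS x ((S.gcd u v)⁻¹ * x * S.gcd u v) ∧
    ∀ tseq : ℕ → G, S.IsTransportSeq k r A (S.gcd u v) tseq →
      ∀ i, i ≤ r → tseq i = S.gcd (useq i) (vseq i) := by
  set t := S.gcd u v with ht
  -- nondegeneracy: δ^j ≼ δ^s → j ≤ s
  have hdel : ∀ j s' : ℤ, (S.δ ^ j)⁻¹ * S.δ ^ s' ∈ S.M → j ≤ s' := by
    intro j s' hjs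
    by_contra hlt
    push_neg at hlt
    have hm : S.δ ^ (s' - j) ∈ S.M := by
      rw [show S.δ ^ (s' - j) = (S.δ ^ j)⁻¹ * S.δ ^ s' from by rw [zpow_sub]; group]
      exact hjs
    have hinv : S.δ⁻¹ ∈ S.M := by
      have hp : S.δ ^ (j - s' - 1) ∈ S.M := by
        have : S.δ ^ (j - s' - 1) = S.δ ^ (j - s' - 1).toNat := by
          rw [← zpow_natCast, Int.toNat_of_nonneg (by omega)]
        rw [this]
        exact pow_mem S.δ_mem _
      have := S.M.mul_mem hp hm
      rwa [show S.δ ^ (j - s' - 1) * S.δ ^ (s' - j) = S.δ⁻¹ by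
        rw [← zpow_add, show j - s' - 1 + (s' - j) = -1 by ring, zpow_neg_one]] at this
    have hδ1 : S.δ = 1 := S.eq_one_of_mem_inv_mem S.δ_mem hinv
    have hA1 := (hnf.2.1 1 le_rfl hr)
    have hA1M : A 1 ∈ S.M := hA1.1.1
    have hA1inv : (A 1)⁻¹ ∈ S.M := by
      have := hA1.1.2
      rwa [hδ1, mul_one] at this
    exact hA1.2 (S.eq_one_of_mem_inv_mem hA1M hA1inv)
  -- extract extremal inf and sup values
  obtain ⟨hconjx, ⟨kx, hkx, hkmax⟩, ⟨sx, hsx, hsmin⟩⟩ := hx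
  obtain ⟨hconju, ⟨ku, hku, hkumax⟩, ⟨su, hsu, hsumin⟩⟩ := hxu
  obtain ⟨hconjv, ⟨kv, hkv, hkvmax⟩, ⟨sv, hsv, hsvmin⟩⟩ := hxv
  have hkuk : ku = kx :=
    le_antisymm (hkmax _ hconju ku hku) (hkumax x (IsConj.refl x) kx hkx)
  have hkvk : kv = kx :=
    le_antisymm (hkmax _ hconjv kv hkv) (hkvmax x (IsConj.refl x) kx hkx)
  have hsus : su = sx :=
    le_antisymm (hsumin x (IsConj.refl x) sx hsx) (hsmin _ hconju su hsu)
  have hsvs : sv = sx :=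
    le_antisymm (hsvmin x (IsConj.refl x) sx hsx) (hsmin _ hconjv sv hsv)
  rw [hkuk] at hku; rw [hkvk] at hkv; rw [hsus] at hsu; rw [hsvs] at hsv
  -- Claim A : δ^kx ≼ x^t
  have hkt : (S.δ ^ kx)⁻¹ * (t⁻¹ * x * t) ∈ S.M := by
    have d1u : (S.tauPow kx t)⁻¹ * S.tauPow kx u ∈ S.M := by
      have := S.tauPow_mem kx (S.gcd_dvd_left u v)
      rwa [show S.tauPow kx (t⁻¹ * u) = (S.tauPow kx t)⁻¹ * S.tauPow kx u by
        rw [Garside.tauPow_eq, Garside.tauPow_eq, Garside.tauPow_eq]; group] at this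
    have d1v : (S.tauPow kx t)⁻¹ * S.tauPow kx v ∈ S.M := by
      have := S.tauPow_mem kx (S.gcd_dvd_right u v)
      rwa [show S.tauPow kx (t⁻¹ * v) = (S.tauPow kx t)⁻¹ * S.tauPow kx v by
        rw [Garside.tauPow_eq, Garside.tauPow_eq, Garside.tauPow_eq]; group] at this
    have d2u : (S.tauPow kx u)⁻¹ * ((S.δ ^ (-kx) * x) * u) ∈ S.M := by
      have := hku.1
      rwa [show (S.δ ^ kx)⁻¹ * (u⁻¹ * x * u) =
        (S.tauPow kx u)⁻¹ * ((S.δ ^ (-kx) * x) * u) by rw [Garside.tauPow_eq, zpow_neg]; group] at this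
    have d2v : (S.tauPow kx v)⁻¹ * ((S.δ ^ (-kx) * x) * v) ∈ S.M := by
      have := hkv.1
      rwa [show (S.δ ^ kx)⁻¹ * (v⁻¹ * x * v) =
        (S.tauPow kx v)⁻¹ * ((S.δ ^ (-kx) * x) * v) by rw [Garside.tauPow_eq, zpow_neg]; group] at this
    have h3 := S.gcd_greatest ((S.δ ^ (-kx) * x) * u) ((S.δ ^ (-kx) * x) * v)
      (S.tauPow kx t) (S.dvd_trans' d1u d2u) (S.dvd_trans' d1v d2v)
    rw [S.gcd_mul_left (S.δ ^ (-kx) * x) u v, ← ht] at h3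
    rwa [show (S.tauPow kx t)⁻¹ * (S.δ ^ (-kx) * x * t) =
      (S.δ ^ kx)⁻¹ * (t⁻¹ * x * t) by rw [Garside.tauPow_eq, zpow_neg]; group] at h3
  -- Claim B : x^t ≼ δ^sx
  have hst : (t⁻¹ * x * t)⁻¹ * S.δ ^ sx ∈ S.M := by
    have d1u : (x * t)⁻¹ * (x * u) ∈ S.M := by
      have := S.gcd_dvd_left u v
      rwa [show t⁻¹ * u = (x * t)⁻¹ * (x * u) by group] at this
    have d1v : (x * t)⁻¹ * (x * v) ∈ S.M := by
      have := S.gcd_dvd_right u v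
      rwa [show t⁻¹ * v = (x * t)⁻¹ * (x * v) by group] at this
    have d2u : (x * u)⁻¹ * (u * S.δ ^ sx) ∈ S.M := by
      have := hsu.1
      rwa [show (u⁻¹ * x * u)⁻¹ * S.δ ^ sx = (x * u)⁻¹ * (u * S.δ ^ sx) by group] at this
    have d2v : (x * v)⁻¹ * (v * S.δ ^ sx) ∈ S.M := by
      have := hsv.1
      rwa [show (v⁻¹ * x * v)⁻¹ * S.δ ^ sx = (x * v)⁻¹ * (v * S.δ ^ sx) by group] at this
    have h3 := S.gcd_greatest (u * S.δ ^ sx) (v * S.δ ^ sx) (x * t)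
      (S.dvd_trans' d1u d2u) (S.dvd_trans' d1v d2v)
    rw [S.gcd_mul_right_zpow sx u v, ← ht] at h3
    rwa [show (x * t)⁻¹ * (t * S.δ ^ sx) = (t⁻¹ * x * t)⁻¹ * S.δ ^ sx by group] at h3
  have hconjt : IsConj x (t⁻¹ * x * t) := isConj_iff.mpr ⟨t⁻¹, by group⟩
  constructor
  · refine ⟨hconjt, ⟨kx, ⟨hkt, ?_⟩, hkmax⟩, ⟨sx, ⟨hst, ?_⟩, hsmin⟩⟩
    · -- maximality of kx for x^t
      intro j hj
      obtain ⟨k', hk', hk'max⟩ := Int.exists_greatest_of_bdd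
        (P := fun z => (S.δ ^ z)⁻¹ * (t⁻¹ * x * t) ∈ S.M)
        ⟨sx, fun z hz => hdel z sx (S.dvd_trans' hz hst)⟩ ⟨kx, hkt⟩
      have : k' ≤ kx := hkmax _ hconjt k' ⟨hk', hk'max⟩
      exact le_trans (hk'max j hj) this
    · -- minimality of sx for x^t
      intro j hj
      obtain ⟨s', hs', hs'min⟩ := Int.exists_least_of_bdd
        (P := fun z => (t⁻¹ * x * t)⁻¹ * S.δ ^ z ∈ S.M)
        ⟨kx, fun z hz => hdel kx z (S.dvd_trans' hkt hz)⟩ ⟨sx, hst⟩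
      have : sx ≤ s' := hsmin _ hconjt s' ⟨hs', hs'min⟩
      exact le_trans this (hs'min j hj)
  · -- the transport sequence of t is the gcd of the sequences
    intro tseq hts i
    induction i with
    | zero =>
      intro _
      rw [hts.1, hus.1, hvs.1, S.gcd_tauPow]
    | succ n ih =>
      intro hir
      have hn1 : 1 ≤ n + 1 := Nat.succ_le_succ (Nat.zero_le n)
      have hstep_t := hts.2.2 (n + 1) hn1 hir
      have hstep_u := hus.2.2 (n + 1) hn1 hir
      have hstep_v := hvs.2.2 (n + 1) hn1 hir
      simp only [Nat.add_sub_cancel] at hstep_t hstep_u hstep_v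
      rw [hstep_t, hstep_u, hstep_v, ih (Nat.le_of_succ_le hir), ht,
        ← S.gcd_mul_left (prodSeg A (n + 1) r) u v,
        ← S.gcd_mul_left ((A (n + 1))⁻¹) (useq n) (vseq n),
        ← S.gcd_tauPow 1 ((A (n + 1))⁻¹ * useq n) ((A (n + 1))⁻¹ * vseq n),
        ← S.gcd_mul_left S.δ (S.tauPow 1 ((A (n + 1))⁻¹ * useq n))
          (S.tauPow 1 ((A (n + 1))⁻¹ * vseq n)),
        S.gcd_gcd_comm]

end GarsideFormal
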